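/- For compact operators T₁, T₂ on a Hilbert space and positive reals λ₁, λ₂, the singular value counting function satisfies n(λ₁λ₂, T₁T₂) ≤ n(λ₁, T₁) + n(λ₂, T₂), where n(λ, T) is the number of singular values of T strictly greater than λ. -/
import Mathlib

/-- The `k`-th singular value (approximation number) of a continuous linear map:
the distance from `T` to the set of operators of rank at most `k`. -/
noncomputable def sNum {E F : Type*} [NormedAddCommGroup E] [NormedSpace ℂ E]
    [NormedAddCommGroup F] [NormedSpace ℂ F] (T : E →L[ℂ] F) (k : ℕ) : ℝ :=
  sInf {c : ℝ | ∃ G : E →L[ℂ] F,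
    Module.rank ℂ (LinearMap.range (G : E →ₗ[ℂ] F)) ≤ (k : Cardinal) ∧ ‖T - G‖ ≤ c}

/-- The singular value counting function `n(λ, T)`: the number of singular values
of `T` strictly greater than `λ`. -/
noncomputable def nCount {E F : Type*} [NormedAddCommGroup E] [NormedSpace ℂ E]
    [NormedAddCommGroup F] [NormedSpace ℂ F] (T : E →L[ℂ] F) (lam : ℝ) : ℕ∞ :=
  {k : ℕ | lam < sNum T k}.encard

section aux

variable {E : Type*} [NormedAddCommGroup E] [NormedSpace ℂ E]

private def sSet (T : E →L[ℂ] E) (k : ℕ) : Set ℝ :=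
  {c : ℝ | ∃ G : E →L[ℂ] E,
    Module.rank ℂ (LinearMap.range (G : E →ₗ[ℂ] E)) ≤ (k : Cardinal) ∧ ‖T - G‖ ≤ c}

private lemma sNum_eq (T : E →L[ℂ] E) (k : ℕ) : sNum T k = sInf (sSet T k) := rfl

private lemma sSet_nonempty (T : E →L[ℂ] E) (k : ℕ) : (sSet T k).Nonempty :=
  ⟨‖T‖, 0, by simp⟩

private lemma sSet_bddBelow (T : E →L[ℂ] E) (k : ℕ) : BddBelow (sSet T k) :=
  ⟨0, fun _ ⟨_, _, hG⟩ => le_trans (norm_nonneg _) hG⟩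

private lemma sNum_nonneg (T : E →L[ℂ] E) (k : ℕ) : 0 ≤ sNum T k :=
  le_csInf (sSet_nonempty T k) fun _ ⟨_, _, hG⟩ => le_trans (norm_nonneg _) hG

private lemma sNum_antitone (T : E →L[ℂ] E) : Antitone (sNum T) := by
  intro j k hjk
  rw [sNum_eq, sNum_eq]
  exact csInf_le_csInf (sSet_bddBelow T k) (sSet_nonempty T j)
    (fun c ⟨A, hr, hn⟩ => ⟨A, le_trans hr (by exact_mod_cast hjk), hn⟩)

/-- Key step: `s_{j+k}(T₁ T₂) ≤ c₁ c₂` whenever `c₁ > s_j(T₁)` and `c₂ > s_k(T₂)`. -/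
private lemma sNum_comp_lt (T₁ T₂ : E →L[ℂ] E) (j k : ℕ)
    {c₁ c₂ : ℝ} (h₁ : sNum T₁ j < c₁) (h₂ : sNum T₂ k < c₂) :
    sNum (T₁ ∘L T₂) (j + k) ≤ c₁ * c₂ := by
  rw [sNum_eq] at h₁ h₂
  obtain ⟨d₁, ⟨G₁, hr₁, hn₁⟩, hd₁⟩ := exists_lt_of_csInf_lt (sSet_nonempty T₁ j) h₁
  obtain ⟨d₂, ⟨G₂, hr₂, hn₂⟩, hd₂⟩ := exists_lt_of_csInf_lt (sSet_nonempty T₂ k) h₂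
  have hc₁ : 0 ≤ c₁ := le_trans (sNum_nonneg T₁ j) (le_of_lt (by rwa [sNum_eq]))
  set A : E →L[ℂ] E := G₁ ∘L T₂ + (T₁ - G₁) ∘L G₂ with hA
  have hrank : Module.rank ℂ (LinearMap.range (A : E →ₗ[ℂ] E)) ≤ ((j + k : ℕ) : Cardinal) := by
    have h1 : LinearMap.rank (A : E →ₗ[ℂ] E)
        ≤ LinearMap.rank ((G₁ : E →ₗ[ℂ] E).comp (T₂ : E →ₗ[ℂ] E))
          + LinearMap.rank (((T₁ - G₁ : E →L[ℂ] E) : E →ₗ[ℂ] E).comp (G₂ : E →ₗ[ℂ] E)) := by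
      apply LinearMap.rank_add_le
    have h2 : LinearMap.rank ((G₁ : E →ₗ[ℂ] E).comp (T₂ : E →ₗ[ℂ] E))
        ≤ LinearMap.rank (G₁ : E →ₗ[ℂ] E) := LinearMap.rank_comp_le_left _ _
    have h3 : LinearMap.rank (((T₁ - G₁ : E →L[ℂ] E) : E →ₗ[ℂ] E).comp (G₂ : E →ₗ[ℂ] E))
        ≤ LinearMap.rank (G₂ : E →ₗ[ℂ] E) := LinearMap.rank_comp_le_right _ _
    calc LinearMap.rank (A : E →ₗ[ℂ] E) ≤ _ := h1
      _ ≤ LinearMap.rank (G₁ : E →ₗ[ℂ] E) + LinearMap.rank (G₂ : E →ₗ[ℂ] E) :=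
        add_le_add h2 h3
      _ ≤ (j : Cardinal) + (k : Cardinal) := add_le_add hr₁ hr₂
      _ = ((j + k : ℕ) : Cardinal) := by push_cast; ring
  have hnorm : ‖T₁ ∘L T₂ - A‖ ≤ c₁ * c₂ := by
    have heq : T₁ ∘L T₂ - A = (T₁ - G₁) ∘L (T₂ - G₂) := by
      ext x; simp [hA]; abel
    rw [heq]
    calc ‖(T₁ - G₁) ∘L (T₂ - G₂)‖ ≤ ‖T₁ - G₁‖ * ‖T₂ - G₂‖ := ContinuousLinearMap.opNorm_comp_le _ _
      _ ≤ c₁ * c₂ := mul_le_mul (le_trans hn₁ hd₁.le) (le_trans hn₂ hd₂.le) (norm_nonneg _) hc₁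
  rw [sNum_eq]
  exact csInf_le (sSet_bddBelow _ _) ⟨A, hrank, hnorm⟩

private lemma sNum_comp_le (T₁ T₂ : E →L[ℂ] E) (j k : ℕ)
    {a b : ℝ} (ha : 0 < a) (hb : 0 < b) (h₁ : sNum T₁ j ≤ a) (h₂ : sNum T₂ k ≤ b) :
    sNum (T₁ ∘L T₂) (j + k) ≤ a * b := by
  refine le_of_forall_gt_imp_ge_of_dense fun r hr => ?_
  have h1 : a < r / b := (lt_div_iff₀ hb).2 hr
  obtain ⟨c₁, hc₁a, hc₁r⟩ := exists_between h1
  have hc₁0 : 0 < c₁ := lt_trans ha hc₁a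
  have hc₂ : b < r / c₁ := by
    rw [lt_div_iff₀ hc₁0]
    calc b * c₁ = c₁ * b := mul_comm _ _
      _ < (r / b) * b := by exact mul_lt_mul_of_pos_right hc₁r hb
      _ = r := div_mul_cancel₀ _ hb.ne'
  have := sNum_comp_lt T₁ T₂ j k (lt_of_le_of_lt h₁ hc₁a) (lt_of_le_of_lt h₂ hc₂)
  calc sNum (T₁ ∘L T₂) (j + k) ≤ c₁ * (r / c₁) := this
    _ = r := mul_div_cancel₀ _ hc₁0.ne'

/-- If the counting set is finite with cardinality `n`, then `sNum T n ≤ lam`. -/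
private lemma sNum_le_of_encard (T : E →L[ℂ] E) (lam : ℝ) (n : ℕ)
    (h : nCount T lam = (n : ℕ∞)) : sNum T n ≤ lam := by
  by_contra hlt
  push_neg at hlt
  have hsub : Set.Iic n ⊆ {k : ℕ | lam < sNum T k} := fun k hk =>
    lt_of_lt_of_le hlt (sNum_antitone T hk)
  have := Set.encard_le_encard hsub
  rw [show {k : ℕ | lam < sNum T k}.encard = nCount T lam from rfl, h,
    ← Finset.coe_Iic, Set.encard_coe_eq_coe_finsetCard, Nat.card_Iic] at this
  exact absurd (show n + 1 ≤ n by exact_mod_cast this) (by omega)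

end aux

/-- The Ky Fan inequality for products: `n(λ₁λ₂, T₁T₂) ≤ n(λ₁, T₁) + n(λ₂, T₂)`. -/
theorem kyFan_product {H : Type*} [NormedAddCommGroup H] [InnerProductSpace ℂ H]
    [CompleteSpace H] (T₁ T₂ : H →L[ℂ] H)
    (h₁ : IsCompactOperator T₁) (h₂ : IsCompactOperator T₂)
    (lam₁ lam₂ : ℝ) (hlam₁ : 0 < lam₁) (hlam₂ : 0 < lam₂) :
    nCount (T₁ ∘L T₂) (lam₁ * lam₂) ≤ nCount T₁ lam₁ + nCount T₂ lam₂ := by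
  rcases eq_or_ne (nCount T₁ lam₁) ⊤ with hn₁ | hn₁
  · rw [hn₁, top_add]; exact le_top
  rcases eq_or_ne (nCount T₂ lam₂) ⊤ with hn₂ | hn₂
  · rw [hn₂, add_top]; exact le_top
  obtain ⟨n₁, hn₁⟩ := WithTop.ne_top_iff_exists.1 hn₁
  obtain ⟨n₂, hn₂⟩ := WithTop.ne_top_iff_exists.1 hn₂
  rw [← hn₁, ← hn₂]
  have hs₁ : sNum T₁ n₁ ≤ lam₁ := sNum_le_of_encard T₁ lam₁ n₁ hn₁.symm
  have hs₂ : sNum T₂ n₂ ≤ lam₂ := sNum_le_of_encard T₂ lam₂ n₂ hn₂.symm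
  have hkey : sNum (T₁ ∘L T₂) (n₁ + n₂) ≤ lam₁ * lam₂ :=
    sNum_comp_le T₁ T₂ n₁ n₂ hlam₁ hlam₂ hs₁ hs₂
  have hsub : {k : ℕ | lam₁ * lam₂ < sNum (T₁ ∘L T₂) k} ⊆ Set.Iio (n₁ + n₂) := by
    intro k hk
    by_contra hge
    simp only [Set.mem_Iio, not_lt] at hge
    exact absurd (lt_of_lt_of_le hk (le_trans (sNum_antitone _ hge) hkey)) (lt_irrefl _)
  calc nCount (T₁ ∘L T₂) (lam₁ * lam₂) ≤ (Set.Iio (n₁ + n₂)).encard := Set.encard_le_encard hsub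
    _ = ((n₁ + n₂ : ℕ) : ℕ∞) := by
        rw [← Finset.coe_Iio, Set.encard_coe_eq_coe_finsetCard, Nat.card_Iio]
    _ = (n₁ : ℕ∞) + (n₂ : ℕ∞) := by push_cast; ring
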